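/- arXiv:0804.1752 — 5 statements merged into one kernel-verified Lean document; each statement's English description precedes it below -/
import Mathlib

section
/- Let n ≥ 2 and φ : ℝⁿ∖{0} → ℝⁿ, φ(x) = x/|x|². Then the componentwise Euclidean bilaplacian of φ satisfies Δ²φ(x) = 8(n−2)(n−4)·x/|x|⁶ for all x ≠ 0. Consequently, for n ≥ 3, the inversion φ is a biharmonic map (i.e. Δ²φ ≡ 0 on ℝⁿ∖{0}) if and only if n = 4. -/
noncomputable section

abbrev E (n : ℕ) := EuclideanSpace ℝ (Fin n)

/-- Partial derivative in the `i`-th coordinate direction. -/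
def pd {m : ℕ} (u : E m → ℝ) (i : Fin m) : E m → ℝ :=
  fun x => fderiv ℝ u x (EuclideanSpace.single i 1)

/-- Euclidean Laplacian `Δu = Σᵢ ∂²u/∂xᵢ²`. -/
def lap {m : ℕ} (u : E m → ℝ) : E m → ℝ :=
  fun x => ∑ i, pd (pd u i) i x

/-! Differentiating twice and using `Σᵢ xᵢ² = |x|²` gives
`Δ (x_α |x|^{-2k}) = 2k(2k - n) x_α |x|^{-2k-2}`. Since `φ_α = x_α |x|^{-2}`, applying this with
`k = 1` and then `k = 2` yields `Δ²φ_α = 2(2 - n) · 4(4 - n) x_α |x|^{-6}`; for `n ≥ 3` this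
vanishes at a basis vector only if `n = 4`. -/

open Filter Topology

section PartialDerivatives

variable {m : ℕ} {u v : E m → ℝ} {x : E m}

theorem pd_congr (h : u =ᶠ[𝓝 x] v) (i : Fin m) : pd u i x = pd v i x := by
  rw [pd, pd, h.fderiv_eq]

theorem lap_congr (h : u =ᶠ[𝓝 x] v) : lap u x = lap v x :=
  Finset.sum_congr rfl fun i _ => pd_congr (h.eventuallyEq_nhds.mono fun _ hy => pd_congr hy i) i

theorem pd_const_mul (c : ℝ) (u : E m → ℝ) (i : Fin m) :
    pd (fun y => c * u y) i = fun x => c * pd u i x := by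
  funext x
  change fderiv ℝ (c • u) x _ = _
  rw [fderiv_const_smul_field]
  rfl

theorem lap_const_mul (c : ℝ) (u : E m → ℝ) : lap (fun y => c * u y) = fun x => c * lap u x := by
  funext x
  simp only [lap, pd_const_mul, Finset.mul_sum]

theorem pd_sub (hu : DifferentiableAt ℝ u x) (hv : DifferentiableAt ℝ v x) (i : Fin m) :
    pd (fun y => u y - v y) i x = pd u i x - pd v i x := by
  simp only [pd, fderiv_fun_sub hu hv, sub_apply]

theorem pd_mul (hu : DifferentiableAt ℝ u x) (hv : DifferentiableAt ℝ v x) (i : Fin m) :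
    pd (fun y => u y * v y) i x = pd u i x * v x + u x * pd v i x := by
  simp only [pd, fderiv_fun_mul hu hv, add_apply, smul_apply, smul_eq_mul]
  ring

theorem pd_coord (α i : Fin m) (x : E m) :
    pd (fun y : E m => y α) i x = if α = i then 1 else 0 := by
  rw [pd, (PiLp.hasFDerivAt_apply 2 x α).fderiv]
  simp

end PartialDerivatives

section InverseSquaredNorm

variable {n : ℕ} {x : E n}

theorem hasFDerivAt_inv_normSq_pow (k : ℕ) (hx : x ≠ 0) :
    HasFDerivAt (fun y : E n => ((‖y‖ ^ 2)⁻¹) ^ k)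
      ((-(2 * k) * ((‖x‖ ^ 2)⁻¹) ^ (k + 1)) • innerSL ℝ x) x := by
  have hr : ‖x‖ ^ 2 ≠ 0 := by positivity
  have hderiv := ((hasDerivAt_inv hr).pow k).comp_hasFDerivAt x (hasFDerivAt_id x).norm_sq
  refine hderiv.congr_fderiv ?_
  ext v
  simp only [smul_apply, ContinuousLinearMap.comp_apply, id_eq,
    ContinuousLinearMap.id_apply, smul_eq_mul]
  rcases k with _ | k
  · simp
  · simp only [Nat.add_sub_cancel, inv_pow]
    push_cast
    ring

theorem differentiableAt_inv_normSq_pow (k : ℕ) (hx : x ≠ 0) :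
    DifferentiableAt ℝ (fun y : E n => ((‖y‖ ^ 2)⁻¹) ^ k) x :=
  (hasFDerivAt_inv_normSq_pow k hx).differentiableAt

theorem pd_inv_normSq_pow (k : ℕ) (i : Fin n) (hx : x ≠ 0) :
    pd (fun y : E n => ((‖y‖ ^ 2)⁻¹) ^ k) i x = -(2 * k) * ((‖x‖ ^ 2)⁻¹) ^ (k + 1) * x i := by
  rw [pd, (hasFDerivAt_inv_normSq_pow k hx).fderiv]
  simp [EuclideanSpace.inner_single_right]

theorem pd_coord_mul_inv_normSq_pow (k : ℕ) (α i : Fin n) (hx : x ≠ 0) :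
    pd (fun y : E n => y α * ((‖y‖ ^ 2)⁻¹) ^ k) i x
      = (if α = i then 1 else 0) * ((‖x‖ ^ 2)⁻¹) ^ k
        - 2 * k * (x α * x i * ((‖x‖ ^ 2)⁻¹) ^ (k + 1)) := by
  rw [pd_mul (by fun_prop) (differentiableAt_inv_normSq_pow k hx), pd_coord,
    pd_inv_normSq_pow k i hx]
  ring

theorem pd_pd_coord_mul_inv_normSq_pow (k : ℕ) (α i : Fin n) (hx : x ≠ 0) :
    pd (pd (fun y : E n => y α * ((‖y‖ ^ 2)⁻¹) ^ k) i) i x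
      = (if α = i then -(4 * k) * x α * ((‖x‖ ^ 2)⁻¹) ^ (k + 1) else 0)
        - 2 * k * x α * ((‖x‖ ^ 2)⁻¹) ^ (k + 1)
        + 4 * k * (k + 1) * x α * x i ^ 2 * ((‖x‖ ^ 2)⁻¹) ^ (k + 2) := by
  have first_pd : pd (fun y : E n => y α * ((‖y‖ ^ 2)⁻¹) ^ k) i =ᶠ[𝓝 x]
      fun y => (if α = i then 1 else 0) * ((‖y‖ ^ 2)⁻¹) ^ k
        - 2 * k * (y α * y i * ((‖y‖ ^ 2)⁻¹) ^ (k + 1)) :=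
    (eventually_ne_nhds hx).mono fun y hy => pd_coord_mul_inv_normSq_pow k α i hy
  have hc := differentiableAt_inv_normSq_pow k hx
  have hc' := differentiableAt_inv_normSq_pow (k + 1) hx
  rw [pd_congr first_pd, pd_sub (by fun_prop) (by fun_prop), pd_const_mul, pd_const_mul]
  beta_reduce
  rw [pd_mul (by fun_prop) hc', pd_mul (by fun_prop) (by fun_prop), pd_coord, pd_coord,
    pd_inv_normSq_pow k i hx, pd_inv_normSq_pow (k + 1) i hx]
  rcases eq_or_ne α i with rfl | hαi
  · simp only [↓reduceIte]
    push_cast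
    ring
  · simp only [↓reduceIte, if_neg hαi]
    push_cast
    ring

theorem lap_coord_mul_inv_normSq_pow (k : ℕ) (α : Fin n) (hx : x ≠ 0) :
    lap (fun y : E n => y α * ((‖y‖ ^ 2)⁻¹) ^ k) x
      = 2 * k * (2 * k - n) * (x α * ((‖x‖ ^ 2)⁻¹) ^ (k + 1)) := by
  have hr : ‖x‖ ^ 2 * (‖x‖ ^ 2)⁻¹ = 1 := mul_inv_cancel₀ (by positivity)
  simp only [lap, pd_pd_coord_mul_inv_normSq_pow k α _ hx, Finset.sum_add_distrib,
    Finset.sum_sub_distrib, Finset.sum_ite_eq, Finset.mem_univ, if_true, Finset.sum_const,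
    Finset.card_univ, Fintype.card_fin, nsmul_eq_mul, ← Finset.sum_mul, ← Finset.mul_sum,
    ← EuclideanSpace.real_norm_sq_eq]
  linear_combination 4 * k * (k + 1) * x α * ((‖x‖ ^ 2)⁻¹) ^ (k + 1) * hr

theorem lap_lap_inversion (hx : x ≠ 0) (α : Fin n) :
    lap (lap (fun y : E n => ((‖y‖ ^ 2)⁻¹ • y) α)) x
      = 8 * ((n : ℝ) - 2) * ((n : ℝ) - 4) * x α / ‖x‖ ^ 6 := by
  have inversion_eq : (fun y : E n => ((‖y‖ ^ 2)⁻¹ • y) α)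
      = fun y => y α * ((‖y‖ ^ 2)⁻¹) ^ 1 := by
    funext y
    simp [mul_comm]
  have lap_eq : lap (fun y : E n => y α * ((‖y‖ ^ 2)⁻¹) ^ 1) =ᶠ[𝓝 x]
      fun y => 2 * (1 : ℕ) * (2 * (1 : ℕ) - n) * (y α * ((‖y‖ ^ 2)⁻¹) ^ 2) :=
    (eventually_ne_nhds hx).mono fun y hy => lap_coord_mul_inv_normSq_pow 1 α hy
  rw [inversion_eq, lap_congr lap_eq, lap_const_mul]
  beta_reduce
  rw [lap_coord_mul_inv_normSq_pow 2 α hx]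
  have inv_pow_three : ((‖x‖ ^ 2)⁻¹) ^ (2 + 1) = (‖x‖ ^ 6)⁻¹ := by rw [inv_pow, ← pow_mul]
  rw [inv_pow_three, div_eq_mul_inv]
  push_cast
  ring

end InverseSquaredNorm

theorem bilap_inversion_general (n : ℕ) :
    (∀ x : E n, x ≠ 0 → ∀ α : Fin n,
      lap (lap (fun y : E n => ((‖y‖ ^ 2)⁻¹ • y) α)) x
        = 8 * ((n : ℝ) - 2) * ((n : ℝ) - 4) * x α / ‖x‖ ^ 6) ∧
    (3 ≤ n →
      ((∀ x : E n, x ≠ 0 → ∀ α : Fin n,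
          lap (lap (fun y : E n => ((‖y‖ ^ 2)⁻¹ • y) α)) x = 0) ↔ n = 4)) := by
  refine ⟨fun x hx α => lap_lap_inversion hx α,
    fun h3 => ⟨fun biharmonic => ?_, fun h4 x hx α => ?_⟩⟩
  · let α : Fin n := ⟨0, by omega⟩
    have he : EuclideanSpace.single α (1 : ℝ) ≠ 0 :=
      (PiLp.single_eq_zero_iff 2 α).not.mpr one_ne_zero
    have h := biharmonic _ he α
    rw [lap_lap_inversion he α] at h
    have h3' : (3 : ℝ) ≤ n := by exact_mod_cast h3
    simp only [PiLp.single_apply, if_true, PiLp.norm_single, norm_one] at h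
    norm_num at h
    rcases h with h | h
    · linarith
    · exact_mod_cast (by linarith : (n : ℝ) = 4)
  · have h4' : (n : ℝ) = 4 := by exact_mod_cast h4
    rw [lap_lap_inversion hx α, h4']
    ring

/-- The componentwise bilaplacian of the inversion `φ(x) = x/|x|²` on `ℝⁿ∖{0}` is
`Δ²φ(x) = 8(n−2)(n−4)x/|x|⁶`; consequently, for `n ≥ 3` the inversion is a biharmonic map
if and only if `n = 4`. -/
theorem bilap_inversion (n : ℕ) (hn : 2 ≤ n) :
    (∀ x : E n, x ≠ 0 → ∀ α : Fin n,
      lap (lap (fun y : E n => ((‖y‖ ^ 2)⁻¹ • y) α)) x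
        = 8 * ((n : ℝ) - 2) * ((n : ℝ) - 4) * x α / ‖x‖ ^ 6) ∧
    (3 ≤ n →
      ((∀ x : E n, x ≠ 0 → ∀ α : Fin n,
          lap (lap (fun y : E n => ((‖y‖ ^ 2)⁻¹ • y) α)) x = 0) ↔ n = 4)) :=
  bilap_inversion_general n

end
end

section
/- On the open unit ball 𝔹⁴ ⊂ ℝ⁴ define λ²(x) = 4/(1−|x|²)², τ(x) = −4x/(1−|x|²), and T(x) = λ²(x)·τ(x) = −16x/(1−|x|²)³. Then for all x ∈ 𝔹⁴: 4Δ(λ²)(x) + 2 div T(x) = 32(4 + 2|x|²)/(1−|x|²)⁴, whereas λ²(x)|τ(x)|² = 64|x|²/(1−|x|²)⁴; hence 4Δ(λ²)(x) + 2 div T(x) ≠ λ²(x)|τ(x)|² for every x ∈ 𝔹⁴. -/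
noncomputable section

/-- Euclidean divergence of a vector field. -/
def div' {m : ℕ} (V : E m → E m) : E m → ℝ :=
  fun x => ∑ i, pd (fun y => V y i) i x

/-- Square dilation of the Poincaré ball metric: `λ²(x) = 4/(1−|x|²)²`. -/
def sqDil : E 4 → ℝ := fun x => 4 / (1 - ‖x‖ ^ 2) ^ 2

/-- Tension field `τ(x) = −4x/(1−|x|²)`. -/
def tau : E 4 → E 4 := fun x => (-4 / (1 - ‖x‖ ^ 2)) • x

/-- The vector field `T = λ²·τ = −16x/(1−|x|²)³`. -/
def T : E 4 → E 4 := fun x => sqDil x • tau x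

/-! The maps `λ²` and `T` are built from radial profiles `c (1 - ‖x‖²)⁻ᵏ`, and `T = -∇λ²`,
so `4Δλ² + 2 div T = 2Δλ²`. The divergence of a radial field, `div (f(‖x‖²) x) = m f + 2‖x‖² f'`,
gives `Δλ² = 64/(1-‖x‖²)³ + 96‖x‖²/(1-‖x‖²)⁴`; the two sides of the trace identity then differ
by `128/(1-‖x‖²)⁴`. -/

open scoped RealInnerProductSpace Topology

lemma hasFDerivAt_div_one_sub_norm_sq_pow {F : Type*} [NormedAddCommGroup F]
    [InnerProductSpace ℝ F] (c : ℝ) (k : ℕ) {x : F} (hx : 1 - ‖x‖ ^ 2 ≠ 0) :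
    HasFDerivAt (fun y => c / (1 - ‖y‖ ^ 2) ^ k)
      ((2 * k * c / (1 - ‖x‖ ^ 2) ^ (k + 1)) • innerSL ℝ x) x := by
  have hprofile : HasDerivAt (fun t : ℝ => c / (1 - t) ^ k) _ (‖x‖ ^ 2) :=
    (hasDerivAt_const _ c).div
      (((hasDerivAt_id (‖x‖ ^ 2)).const_sub 1).pow k) (pow_ne_zero k hx)
  refine (hprofile.comp_hasFDerivAt x (hasFDerivAt_id x).norm_sq).congr_fderiv ?_
  ext v
  rcases Nat.eq_zero_or_pos k with rfl | hk
  · simp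
  · obtain ⟨j, rfl⟩ := Nat.exists_eq_add_of_lt hk
    simp only [zero_mul, zero_sub, id_eq, add_tsub_cancel_right, mul_neg, mul_one, neg_neg,
      ContinuousLinearMap.comp_id, smul_apply, coe_innerSL_apply, nsmul_eq_mul, smul_eq_mul]
    field_simp
    ring

lemma isOpen_one_sub_norm_sq_ne_zero {F : Type*} [SeminormedAddCommGroup F] :
    IsOpen {y : F | 1 - ‖y‖ ^ 2 ≠ 0} :=
  isOpen_ne_fun (by fun_prop) continuous_const

section Euclidean

variable {m : ℕ}

lemma pd_div_one_sub_norm_sq_pow (c : ℝ) (k : ℕ) (i : Fin m) {x : E m}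
    (hx : 1 - ‖x‖ ^ 2 ≠ 0) :
    pd (fun y : E m => c / (1 - ‖y‖ ^ 2) ^ k) i x
      = 2 * k * c / (1 - ‖x‖ ^ 2) ^ (k + 1) * x i := by
  simp [pd, (hasFDerivAt_div_one_sub_norm_sq_pow c k hx).fderiv,
    EuclideanSpace.inner_single_right]

lemma div'_div_one_sub_norm_sq_pow_smul (c : ℝ) (k : ℕ) {x : E m} (hx : 1 - ‖x‖ ^ 2 ≠ 0) :
    div' (fun y : E m => (c / (1 - ‖y‖ ^ 2) ^ k) • y) x
      = m * c / (1 - ‖x‖ ^ 2) ^ k + 2 * k * c * ‖x‖ ^ 2 / (1 - ‖x‖ ^ 2) ^ (k + 1) := by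
  have hcoord (i : Fin m) : pd (fun y : E m => ((c / (1 - ‖y‖ ^ 2) ^ k) • y) i) i x
      = c / (1 - ‖x‖ ^ 2) ^ k + 2 * k * c / (1 - ‖x‖ ^ 2) ^ (k + 1) * x i ^ 2 := by
    have h : HasFDerivAt (fun y : E m => c / (1 - ‖y‖ ^ 2) ^ k * y i) _ x :=
      (hasFDerivAt_div_one_sub_norm_sq_pow c k hx).mul
        (EuclideanSpace.proj i : E m →L[ℝ] ℝ).hasFDerivAt
    simp only [PiLp.smul_apply, smul_eq_mul, pd, h.fderiv]
    simp only [add_apply, smul_apply, PiLp.proj_apply, PiLp.single_eq_same, smul_eq_mul, mul_one,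
      coe_innerSL_apply, EuclideanSpace.inner_single_right, Real.ringHom_apply, one_mul]
    ring
  simp only [div', hcoord, Finset.sum_add_distrib, ← Finset.mul_sum,
    ← EuclideanSpace.real_norm_sq_eq, Finset.sum_const, Finset.card_univ, Fintype.card_fin,
    nsmul_eq_mul]
  ring

lemma lap_eq_div'_of_pd_eventuallyEq {u : E m → ℝ} {V : E m → E m} {x : E m}
    (h : ∀ i, pd u i =ᶠ[𝓝 x] fun y => V y i) : lap u x = div' V x :=
  Finset.sum_congr rfl fun i _ => by rw [pd, pd, (h i).fderiv_eq]

end Euclidean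

lemma pd_sqDil_eventuallyEq (i : Fin 4) {x : E 4} (hx : 1 - ‖x‖ ^ 2 ≠ 0) :
    pd sqDil i =ᶠ[𝓝 x] fun y => ((16 / (1 - ‖y‖ ^ 2) ^ 3) • y) i := by
  filter_upwards [isOpen_one_sub_norm_sq_ne_zero.mem_nhds hx] with y hy
  unfold sqDil
  rw [pd_div_one_sub_norm_sq_pow 4 2 i hy, PiLp.smul_apply, smul_eq_mul]
  norm_num

lemma lap_sqDil {x : E 4} (hx : 1 - ‖x‖ ^ 2 ≠ 0) :
    lap sqDil x = 64 / (1 - ‖x‖ ^ 2) ^ 3 + 96 * ‖x‖ ^ 2 / (1 - ‖x‖ ^ 2) ^ 4 := by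
  rw [lap_eq_div'_of_pd_eventuallyEq fun i => pd_sqDil_eventuallyEq i hx,
    div'_div_one_sub_norm_sq_pow_smul 16 3 hx]
  norm_num

lemma T_eq_smul (y : E 4) : T y = (-16 / (1 - ‖y‖ ^ 2) ^ 3) • y := by
  rw [T, tau, sqDil, smul_smul]
  congr 1
  rcases eq_or_ne (1 - ‖y‖ ^ 2) 0 with h | h
  · simp [h]
  · field_simp
    ring

lemma div'_T_eq_neg_lap_sqDil {x : E 4} (hx : 1 - ‖x‖ ^ 2 ≠ 0) :
    div' T x = -lap sqDil x := by
  rw [show T = _ from funext T_eq_smul, div'_div_one_sub_norm_sq_pow_smul (-16) 3 hx,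
    lap_sqDil hx]
  norm_num
  ring

lemma sqDil_mul_norm_tau_sq (y : E 4) :
    sqDil y * ‖tau y‖ ^ 2 = 64 * ‖y‖ ^ 2 / (1 - ‖y‖ ^ 2) ^ 4 := by
  rw [sqDil, tau, norm_smul, mul_pow, Real.norm_eq_abs, sq_abs]
  rcases eq_or_ne (1 - ‖y‖ ^ 2) 0 with h | h
  · simp [h]
  · field_simp
    ring

/-- On the unit ball `𝔹⁴`: `4Δ(λ²) + 2divT = 32(4+2|x|²)/(1−|x|²)⁴` while
`λ²|τ|² = 64|x|²/(1−|x|²)⁴`, so the trace identity for biharmonic morphisms fails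
everywhere: the identity map to the Poincaré ball is not a biharmonic morphism. -/
theorem poincare_ball_trace_identity_fails (x : E 4) (hx : ‖x‖ < 1) :
    (∀ i : Fin 4, T x i = -16 * x i / (1 - ‖x‖ ^ 2) ^ 3) ∧
    4 * lap sqDil x + 2 * div' T x = 32 * (4 + 2 * ‖x‖ ^ 2) / (1 - ‖x‖ ^ 2) ^ 4 ∧
    sqDil x * ‖tau x‖ ^ 2 = 64 * ‖x‖ ^ 2 / (1 - ‖x‖ ^ 2) ^ 4 ∧
    4 * lap sqDil x + 2 * div' T x ≠ sqDil x * ‖tau x‖ ^ 2 := by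
  have hA : 1 - ‖x‖ ^ 2 ≠ 0 := by
    have : ‖x‖ ^ 2 < 1 := pow_lt_one₀ (norm_nonneg x) hx two_ne_zero
    linarith
  have htrace : 4 * lap sqDil x + 2 * div' T x
      = 32 * (4 + 2 * ‖x‖ ^ 2) / (1 - ‖x‖ ^ 2) ^ 4 := by
    rw [div'_T_eq_neg_lap_sqDil hA, lap_sqDil hA]
    field_simp
    ring
  refine ⟨fun i => ?_, htrace, sqDil_mul_norm_tau_sq x, ?_⟩
  · rw [T_eq_smul, PiLp.smul_apply, smul_eq_mul]
    ring
  · rw [htrace, sqDil_mul_norm_tau_sq, Ne, div_left_inj' (pow_ne_zero 4 hA)]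
    intro h
    linarith

end
end

section
/- Let n ≥ 2, U = {x ∈ ℝⁿ : xₙ > 0} the open upper half-space, and ρ : U → ℝ, ρ(x) = −ln xₙ. Define the vector field E(x) = Δ(∇ρ)(x) − Δρ(x)·∇ρ(x) + 2∇(|∇ρ|²)(x) + (2−n)|∇ρ(x)|²·∇ρ(x) − (n−1)e^{2ρ(x)}·∇ρ(x). Then E(x) = (2(n−4)/xₙ³)·eₙ for all x ∈ U, where eₙ is the n-th standard basis vector; consequently E ≡ 0 on U if and only if n = 4. -/
/-!
With `ρ = −ln xₘ` everything depends on the single coordinate `t = xₘ` and points along `eₘ`: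
`∇ρ = −t⁻¹ eₘ`, `|∇ρ|² = e^{2ρ} = t⁻²`, `Δρ = t⁻²`, while `Δ(∂ᵢρ)` and `∂ᵢ|∇ρ|²` are both
`−2t⁻³ δᵢₘ`. Substituting, `Eᵢ = (−2 + 1 − 4 − (2 − n) + (n − 1)) t⁻³ δᵢₘ = 2(n − 4) t⁻³ δᵢₘ`.
-/

noncomputable section

open Filter Topology Real

namespace Filter.EventuallyEq

variable {N : ℕ} {u v : E N → ℝ} {x : E N}

theorem pd_eq (h : u =ᶠ[𝓝 x] v) (i : Fin N) : pd u i x = pd v i x := by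
  simp only [pd, h.fderiv_eq]

protected theorem pd (h : u =ᶠ[𝓝 x] v) (i : Fin N) : pd u i =ᶠ[𝓝 x] pd v i :=
  h.eventuallyEq_nhds.mono fun _ hy => hy.pd_eq i

theorem lap_eq (h : u =ᶠ[𝓝 x] v) : lap u x = lap v x :=
  Finset.sum_congr rfl fun i _ => (h.pd i).pd_eq i

end Filter.EventuallyEq

section CoordinateFunctions

variable {N : ℕ} {f f' : ℝ → ℝ} {c : ℝ} {m : Fin N} {x : E N}

theorem eventually_nhds_of_coord {p : ℝ → Prop} (h : ∀ᶠ t in 𝓝 (x m), p t) :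
    ∀ᶠ y : E N in 𝓝 x, p (y m) :=
  (EuclideanSpace.proj (𝕜 := ℝ) m).continuous.continuousAt.eventually h

theorem hasFDerivAt_comp_coord (h : HasDerivAt f c (x m)) :
    HasFDerivAt (fun z : E N => f (z m)) (c • EuclideanSpace.proj (𝕜 := ℝ) m) x := by
  refine (h.hasFDerivAt.comp x (EuclideanSpace.proj (𝕜 := ℝ) m).hasFDerivAt).congr_fderiv ?_
  ext v
  simp [mul_comm]

theorem pd_comp_coord (h : HasDerivAt f c (x m)) (j : Fin N) :
    pd (fun z : E N => f (z m)) j x = if j = m then c else 0 := by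
  simp [pd, (hasFDerivAt_comp_coord h).fderiv, eq_comm]

theorem hasGradientAt_comp_coord (h : HasDerivAt f c (x m)) :
    HasGradientAt (fun z : E N => f (z m)) (c • EuclideanSpace.single m 1) x := by
  rw [hasGradientAt_iff_hasFDerivAt]
  refine (hasFDerivAt_comp_coord h).congr_fderiv ?_
  ext v
  simp [EuclideanSpace.inner_single_left]

theorem lap_comp_coord (hf : ∀ᶠ t in 𝓝 (x m), HasDerivAt f (f' t) t)
    (hf' : HasDerivAt f' c (x m)) :
    lap (fun y : E N => f (y m)) x = c := by
  have hf_near : ∀ᶠ y : E N in 𝓝 x, HasDerivAt f (f' (y m)) (y m) :=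
    eventually_nhds_of_coord hf
  have hpd (j : Fin N) : pd (fun y : E N => f (y m)) j =ᶠ[𝓝 x]
      fun y => if j = m then f' (y m) else 0 :=
    hf_near.mono fun y hy => pd_comp_coord hy j
  have hpd_pd (j : Fin N) : pd (pd (fun y : E N => f (y m)) j) j x = if j = m then c else 0 := by
    rw [(hpd j).pd_eq j]
    split_ifs with hj
    · simpa [hj] using pd_comp_coord hf' m
    · simp [pd]
  simp [lap, hpd_pd]

end CoordinateFunctions

theorem hasDerivAt_inv_sq {t : ℝ} (ht : t ≠ 0) :
    HasDerivAt (fun s : ℝ => (s ^ 2)⁻¹) (-2 / t ^ 3) t := by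
  refine ((hasDerivAt_pow 2 t).inv (pow_ne_zero 2 ht)).congr_deriv ?_
  field_simp
  ring

theorem exp_two_mul_neg_log {t : ℝ} (ht : 0 < t) : exp (2 * -log t) = (t ^ 2)⁻¹ := by
  rw [mul_neg, exp_neg, ← exp_log (pow_pos ht 2), log_pow]
  norm_num

section NegLogCoord

variable {N : ℕ} {m : Fin N} {x : E N}

theorem gradient_neg_log_coord (hx : 0 < x m) :
    gradient (fun z : E N => -log (z m)) x = (-(x m)⁻¹) • EuclideanSpace.single m 1 :=
  (hasGradientAt_comp_coord (hasDerivAt_log hx.ne').neg).gradient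

theorem gradient_neg_log_coord_eventuallyEq (hx : 0 < x m) :
    gradient (fun z : E N => -log (z m)) =ᶠ[𝓝 x]
      fun y => (-(y m)⁻¹) • EuclideanSpace.single m 1 :=
  (eventually_nhds_of_coord (eventually_gt_nhds hx)).mono fun _ hy => gradient_neg_log_coord hy

theorem norm_sq_gradient_neg_log_coord (hx : 0 < x m) :
    ‖gradient (fun z : E N => -log (z m)) x‖ ^ 2 = (x m ^ 2)⁻¹ := by
  simp [gradient_neg_log_coord hx, norm_smul, inv_pow]

theorem lap_neg_log_coord (hx : 0 < x m) :
    lap (fun z : E N => -log (z m)) x = (x m ^ 2)⁻¹ := by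
  refine lap_comp_coord (f := fun t => -log t) (f' := fun t => -t⁻¹) ?_ ?_
  · filter_upwards [eventually_gt_nhds hx] with t ht
    exact (hasDerivAt_log ht.ne').neg
  · exact (hasDerivAt_inv hx.ne').neg.congr_deriv (neg_neg _)

theorem lap_gradient_neg_log_coord (hx : 0 < x m) (i : Fin N) :
    lap (fun y => gradient (fun z : E N => -log (z m)) y i) x
      = EuclideanSpace.single m (1 : ℝ) i * (-2 / x m ^ 3) := by
  set s := EuclideanSpace.single m (1 : ℝ) i
  have hcomp : (fun y => gradient (fun z : E N => -log (z m)) y i) =ᶠ[𝓝 x]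
      fun y => s * -(y m)⁻¹ :=
    (gradient_neg_log_coord_eventuallyEq hx).mono fun y hy => by simp [hy, s, mul_comm]
  rw [hcomp.lap_eq]
  refine lap_comp_coord (f := fun t => s * -t⁻¹) (f' := fun t => s * (t ^ 2)⁻¹) ?_
    ((hasDerivAt_inv_sq hx.ne').const_mul s)
  filter_upwards [eventually_ne_nhds hx.ne'] with t ht
  simpa using ((hasDerivAt_inv ht).neg).const_mul s

theorem gradient_norm_sq_gradient_neg_log_coord (hx : 0 < x m) (i : Fin N) :
    gradient (fun y => ‖gradient (fun z : E N => -log (z m)) y‖ ^ 2) x i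
      = EuclideanSpace.single m (1 : ℝ) i * (-2 / x m ^ 3) := by
  have hnorm : (fun y => ‖gradient (fun z : E N => -log (z m)) y‖ ^ 2) =ᶠ[𝓝 x]
      fun y => (y m ^ 2)⁻¹ :=
    (eventually_nhds_of_coord (eventually_gt_nhds hx)).mono fun _ hy =>
      norm_sq_gradient_neg_log_coord hy
  rw [hnorm.gradient_eq, (hasGradientAt_comp_coord (hasDerivAt_inv_sq hx.ne')).gradient]
  simp [mul_comm]

end NegLogCoord

/-- The `i`-th component of the vector field `E` of the statement, for an arbitrary `ρ`. -/
def biharmonicField {n : ℕ} (ρ : E n → ℝ) (x : E n) (i : Fin n) : ℝ :=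
  lap (fun y => gradient ρ y i) x - lap ρ x * gradient ρ x i
    + 2 * gradient (fun y => ‖gradient ρ y‖ ^ 2) x i
    + (2 - (n : ℝ)) * ‖gradient ρ x‖ ^ 2 * gradient ρ x i
    - ((n : ℝ) - 1) * exp (2 * ρ x) * gradient ρ x i

theorem biharmonicField_neg_log_coord {n : ℕ} {m : Fin n} {x : E n} (hx : 0 < x m)
    (i : Fin n) :
    biharmonicField (fun z : E n => -log (z m)) x i
      = 2 * ((n : ℝ) - 4) / x m ^ 3 * EuclideanSpace.single m (1 : ℝ) i := by
  have hgrad : gradient (fun z : E n => -log (z m)) x i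
      = EuclideanSpace.single m (1 : ℝ) i * -(x m)⁻¹ := by
    simp [gradient_neg_log_coord hx, mul_comm]
  rw [biharmonicField, lap_gradient_neg_log_coord hx, lap_neg_log_coord hx, hgrad,
    gradient_norm_sq_gradient_neg_log_coord hx, norm_sq_gradient_neg_log_coord hx,
    exp_two_mul_neg_log hx]
  field_simp
  ring

/-- The biharmonicity equation for the identity map from the flat upper half-space to the
hyperbolic metric `e^{2ρ}ds² = xₙ⁻²ds²`, `ρ = −ln xₙ`: the vector field
`E = Δ(∇ρ) − Δρ·∇ρ + 2∇(|∇ρ|²) + (2−n)|∇ρ|²∇ρ − (n−1)e^{2ρ}∇ρ` equals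
`(2(n−4)/xₙ³)eₙ`, hence vanishes identically iff `n = 4`. -/
theorem half_space_biharmonic_iff_dim_four (n : ℕ) (hn : 2 ≤ n) :
    (∀ x : E n, 0 < x ⟨n - 1, by omega⟩ → ∀ i : Fin n,
      (lap (fun y => gradient (fun z : E n => -Real.log (z ⟨n - 1, by omega⟩)) y i) x
        - lap (fun z : E n => -Real.log (z ⟨n - 1, by omega⟩)) x
            * gradient (fun z : E n => -Real.log (z ⟨n - 1, by omega⟩)) x i
        + 2 * gradient (fun y =>
            ‖gradient (fun z : E n => -Real.log (z ⟨n - 1, by omega⟩)) y‖ ^ 2) x i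
        + (2 - (n : ℝ))
            * ‖gradient (fun z : E n => -Real.log (z ⟨n - 1, by omega⟩)) x‖ ^ 2
            * gradient (fun z : E n => -Real.log (z ⟨n - 1, by omega⟩)) x i
        - ((n : ℝ) - 1)
            * Real.exp (2 * (-Real.log (x ⟨n - 1, by omega⟩)))
            * gradient (fun z : E n => -Real.log (z ⟨n - 1, by omega⟩)) x i)
        = 2 * ((n : ℝ) - 4) / (x ⟨n - 1, by omega⟩) ^ 3
            * (EuclideanSpace.single (⟨n - 1, by omega⟩ : Fin n) (1 : ℝ)) i) ∧
    ((∀ x : E n, 0 < x ⟨n - 1, by omega⟩ → ∀ i : Fin n,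
      (lap (fun y => gradient (fun z : E n => -Real.log (z ⟨n - 1, by omega⟩)) y i) x
        - lap (fun z : E n => -Real.log (z ⟨n - 1, by omega⟩)) x
            * gradient (fun z : E n => -Real.log (z ⟨n - 1, by omega⟩)) x i
        + 2 * gradient (fun y =>
            ‖gradient (fun z : E n => -Real.log (z ⟨n - 1, by omega⟩)) y‖ ^ 2) x i
        + (2 - (n : ℝ))
            * ‖gradient (fun z : E n => -Real.log (z ⟨n - 1, by omega⟩)) x‖ ^ 2
            * gradient (fun z : E n => -Real.log (z ⟨n - 1, by omega⟩)) x i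
        - ((n : ℝ) - 1)
            * Real.exp (2 * (-Real.log (x ⟨n - 1, by omega⟩)))
            * gradient (fun z : E n => -Real.log (z ⟨n - 1, by omega⟩)) x i)
        = 0) ↔ n = 4) := by
  set m : Fin n := ⟨n - 1, by omega⟩
  have hfield (x : E n) (hx : 0 < x m) (i : Fin n) :=
    biharmonicField_neg_log_coord (n := n) hx i
  refine ⟨hfield, fun hzero => ?_, fun h4 x hx i => ?_⟩
  · have hpt : 0 < EuclideanSpace.single m (1 : ℝ) m := by simp
    have h := (hfield _ hpt m).symm.trans (hzero _ hpt m)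
    simp only [PiLp.single_apply, if_true, one_pow, div_one, mul_one] at h
    exact_mod_cast (by linarith : (n : ℝ) = 4)
  · exact (hfield x hx i).trans (by simp [show (n : ℝ) = 4 by exact_mod_cast h4])

end
end

section
/- Let β : ℝ → (0,∞) be smooth and set f = β′/β. Define the operator L on smooth functions u : ℝ³ → ℝ by (Lu)(x,y,z) = u_{xx} + u_{yy} + β(x)⁻²·u_{zz} + f(x)·u_x. Then for the coordinate functions u(x,y,z) = x and v(x,y,z) = y one has: Lv = 0, (Lu)(x,y,z) = f(x), and (L(Lu))(x,y,z) = f″(x) + f(x)f′(x). Consequently L(Lu) = 0 and L(Lv) = 0 on ℝ³ if and only if f″ + f·f′ = 0 on ℝ. -/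
noncomputable section

/-- The Laplace–Beltrami operator of the metric `dx² + dy² + β²(x)dz²` on `ℝ³`:
`Lu = u_xx + u_yy + β(x)⁻²u_zz + f(x)u_x` with `f = β′/β`. -/
def Lop (β : ℝ → ℝ) (u : ℝ → ℝ → ℝ → ℝ) : ℝ → ℝ → ℝ → ℝ :=
  fun x y z =>
    deriv (fun t => deriv (fun s => u s y z) t) x
      + deriv (fun t => deriv (fun s => u x s z) t) y
      + ((β x) ^ 2)⁻¹ * deriv (fun t => deriv (fun s => u x y s) t) z
      + (deriv β x / β x) * deriv (fun s => u s y z) x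

/-- For the projection `(x,y,z) ↦ (x,y)` from `(ℝ³, dx²+dy²+β²(x)dz²)` to the flat plane:
`Ly = 0`, `Lx = f`, `L(Lx) = f″ + ff′` (with `f = β′/β`), so the projection is biharmonic
iff `f″ + ff′ = 0`. -/
theorem projection_biharmonic_iff (β : ℝ → ℝ) (hβ : ContDiff ℝ (⊤ : ℕ∞) β)
    (hpos : ∀ x, 0 < β x) :
    (∀ x y z : ℝ, Lop β (fun _ s _ => s) x y z = 0) ∧
    (∀ x y z : ℝ, Lop β (fun t _ _ => t) x y z = deriv β x / β x) ∧
    (∀ x y z : ℝ, Lop β (Lop β (fun t _ _ => t)) x y z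
      = deriv (deriv (fun t => deriv β t / β t)) x
        + (deriv β x / β x) * deriv (fun t => deriv β t / β t) x) ∧
    (((∀ x y z : ℝ, Lop β (Lop β (fun t _ _ => t)) x y z = 0) ∧
        (∀ x y z : ℝ, Lop β (Lop β (fun _ s _ => s)) x y z = 0)) ↔
      (∀ x : ℝ, deriv (deriv (fun t => deriv β t / β t)) x
        + (deriv β x / β x) * deriv (fun t => deriv β t / β t) x = 0)) := by
  have h1 : Lop β (fun _ s _ => s) = fun _ _ _ => (0:ℝ) := by
    funext x y z; simp [Lop]
  have h0 : Lop β (fun _ _ _ => (0:ℝ)) = fun _ _ _ => (0:ℝ) := by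
    funext x y z; simp [Lop]
  have h2 : Lop β (fun t _ _ => t) = fun x _ _ => deriv β x / β x := by
    funext x y z; simp [Lop]
  have h3 : ∀ x y z : ℝ, Lop β (Lop β (fun t _ _ => t)) x y z
      = deriv (deriv (fun t => deriv β t / β t)) x
        + (deriv β x / β x) * deriv (fun t => deriv β t / β t) x := by
    intro x y z
    rw [h2]
    simp [Lop]
  refine ⟨fun x y z => by rw [h1], fun x y z => by rw [h2], h3, ?_⟩
  constructor
  · rintro ⟨ha, _⟩ x
    rw [← h3 x 0 0]; exact ha x 0 0
  · intro h
    exact ⟨fun x y z => by rw [h3]; exact h x, fun x y z => by rw [h1, h0]⟩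

end
end

section
/- Let c₁ ≠ 0 be a real number and let f(x) = −c₁(1 + e^{c₁x})/(1 − e^{c₁x}), defined on any open interval on which e^{c₁x} ≠ 1 (for instance on (0,∞)). Then f satisfies the ordinary differential equation f″ + f·f′ = 0, and f is nowhere zero on its domain. -/
/-! `f` is `c₁ coth (c₁ x / 2)`, so it solves the Riccati equation `f' = (c₁² - f²) / 2` wherever
`e^{c₁ x} ≠ 1`; differentiating that equation once more gives `f'' = -f f'`. -/

open Real Filter Topology

theorem deriv_deriv_add_mul_deriv_eq_zero_of_riccati {f : ℝ → ℝ} {U : Set ℝ} {x : ℝ} (k : ℝ)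
    (hU : IsOpen U) (hf : ∀ y ∈ U, HasDerivAt f ((k - f y ^ 2) / 2) y) (hx : x ∈ U) :
    deriv (deriv f) x + f x * deriv f x = 0 := by
  have hderiv : deriv f =ᶠ[𝓝 x] fun y => (k - f y ^ 2) / 2 :=
    eventually_of_mem (hU.mem_nhds hx) fun y hy => (hf y hy).deriv
  have hf' := hf x hx
  have hderiv2 : HasDerivAt (deriv f) ((0 - 2 * f x * ((k - f x ^ 2) / 2)) / 2) x := by
    simpa using (((hf'.pow 2).const_sub k).div_const 2).congr_of_eventuallyEq hderiv
  rw [hderiv2.deriv, hf'.deriv]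
  ring

noncomputable def cothProfile (c t : ℝ) : ℝ := -c * (1 + exp (c * t)) / (1 - exp (c * t))

theorem hasDerivAt_cothProfile {c y : ℝ} (hy : exp (c * y) ≠ 1) :
    HasDerivAt (cothProfile c) ((c ^ 2 - cothProfile c y ^ 2) / 2) y := by
  have hexp : HasDerivAt (fun t => exp (c * t)) (c * exp (c * y)) y := by
    simpa [mul_comm] using ((hasDerivAt_id y).const_mul c).exp
  have hden : 1 - exp (c * y) ≠ 0 := sub_ne_zero.mpr (Ne.symm hy)
  refine (((hexp.const_add 1).const_mul (-c)).div (hexp.const_sub 1) hden).congr_deriv ?_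
  unfold cothProfile
  field_simp
  ring

theorem cothProfile_ne_zero {c y : ℝ} (hc : c ≠ 0) (hy : exp (c * y) ≠ 1) :
    cothProfile c y ≠ 0 :=
  div_ne_zero (mul_ne_zero (neg_ne_zero.mpr hc) (by positivity)) (sub_ne_zero.mpr (Ne.symm hy))

theorem exp_mul_ne_one {c y : ℝ} (hc : c ≠ 0) (hy : y ≠ 0) : exp (c * y) ≠ 1 := by
  rw [Ne, exp_eq_one_iff]
  exact mul_ne_zero hc hy

/-- The function `f(x) = −c₁(1+e^{c₁x})/(1−e^{c₁x})` satisfies the ODE `f″ + ff′ = 0` and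
is nowhere zero on `(0,∞)` (an open interval on which `e^{c₁x} ≠ 1`). -/
theorem ode_solution (c₁ : ℝ) (hc₁ : c₁ ≠ 0) :
    ∀ x ∈ Set.Ioi (0 : ℝ),
      deriv (deriv (fun t : ℝ => -c₁ * (1 + Real.exp (c₁ * t)) / (1 - Real.exp (c₁ * t)))) x
        + (-c₁ * (1 + Real.exp (c₁ * x)) / (1 - Real.exp (c₁ * x)))
          * deriv (fun t : ℝ => -c₁ * (1 + Real.exp (c₁ * t)) / (1 - Real.exp (c₁ * t))) x
        = 0 ∧
      -c₁ * (1 + Real.exp (c₁ * x)) / (1 - Real.exp (c₁ * x)) ≠ 0 := by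
  intro x hx
  have hexp : ∀ y ∈ Set.Ioi (0 : ℝ), exp (c₁ * y) ≠ 1 := fun y hy =>
    exp_mul_ne_one hc₁ (ne_of_gt hy)
  exact ⟨deriv_deriv_add_mul_deriv_eq_zero_of_riccati (c₁ ^ 2) isOpen_Ioi
      (fun y hy => hasDerivAt_cothProfile (hexp y hy)) hx,
    cothProfile_ne_zero hc₁ (hexp x hx)⟩
end
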